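/- arXiv:1705.08138 — 4 statements merged into one kernel-verified Lean document; each statement's English description precedes it below -/
import Mathlib

section
/- Let k > 0 and 0 < κ ≤ k² be real numbers. Then for all real numbers b ≥ 0 and m ≥ 0, the complex number b − (k² + iκ)m satisfies |b − (k² + iκ)m| ≥ (κ/(2√2 k²))·(b + k²m). -/
/-!
With `z = b - (k² + iκ)m` we have `Re z = b - k²m`, `|Im z| = |κm|` and
`|Re z| + |Im z| ≤ √2 ‖z‖`. Splitting `b + k²m = (b - k²m) + 2k²m` gives
`κ/(2k²) (b + k²m) = κ/(2k²) (b - k²m) + κm ≤ |b - k²m| + |κm|`, since `κ/(2k²) ≤ 1`.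
-/

open Complex

theorem Complex.abs_re_add_abs_im_le_sqrt_two_mul_norm (z : ℂ) :
    |z.re| + |z.im| ≤ √2 * ‖z‖ := by
  rw [norm_def, ← Real.sqrt_mul zero_le_two, normSq_apply]
  apply Real.le_sqrt_of_sq_le
  nlinarith [sq_nonneg (|z.re| - |z.im|), sq_abs z.re, sq_abs z.im]

theorem div_two_mul_mul_add_le {a κ : ℝ} (ha : 0 < a) (hκ : |κ| ≤ 2 * a) (b m : ℝ) :
    κ / (2 * a) * (b + a * m) ≤ |b - a * m| + |κ * m| := by
  have hdiv : |κ / (2 * a)| ≤ 1 := by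
    rw [abs_div, abs_of_pos (by positivity : 0 < 2 * a)]
    exact div_le_one_of_le₀ hκ (by positivity)
  calc κ / (2 * a) * (b + a * m) = κ / (2 * a) * (b - a * m) + κ * m := by
        field_simp; ring
    _ ≤ |κ / (2 * a)| * |b - a * m| + |κ * m| := by
        rw [← abs_mul]
        exact add_le_add (le_abs_self _) (le_abs_self _)
    _ ≤ |b - a * m| + |κ * m| := by
        gcongr
        exact mul_le_of_le_one_left (abs_nonneg _) hdiv

theorem scalar_coercivity_general (k κ : ℝ) (hκ0 : 0 < κ) (hκ : κ ≤ k ^ 2)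
    (b m : ℝ) :
    κ / (2 * Real.sqrt 2 * k ^ 2) * (b + k ^ 2 * m) ≤
      ‖(b : ℂ) - ((k : ℂ) ^ 2 + (κ : ℂ) * I) * (m : ℂ)‖ := by
  set z : ℂ := (b : ℂ) - ((k : ℂ) ^ 2 + (κ : ℂ) * I) * (m : ℂ)
  have hk2 : 0 < k ^ 2 := hκ0.trans_le hκ
  have hre : z.re = b - k ^ 2 * m := by simp [z, pow_two]
  have him : |z.im| = |κ * m| := by simp [z, pow_two]
  have hscalar : κ / (2 * k ^ 2) * (b + k ^ 2 * m) ≤ |z.re| + |z.im| := by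
    rw [hre, him]
    exact div_two_mul_mul_add_le hk2 (by rw [abs_of_pos hκ0]; linarith) b m
  calc κ / (2 * Real.sqrt 2 * k ^ 2) * (b + k ^ 2 * m)
      = κ / (2 * k ^ 2) * (b + k ^ 2 * m) / √2 := by ring
    _ ≤ (|z.re| + |z.im|) / √2 := by gcongr
    _ ≤ ‖z‖ := by
        rw [div_le_iff₀' (by positivity)]
        exact z.abs_re_add_abs_im_le_sqrt_two_mul_norm

/-- Let `k > 0` and `0 < κ ≤ k²` be real numbers. Then for all real numbers `b ≥ 0` and
`m ≥ 0`, the complex number `b − (k² + iκ)m` satisfies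
`|b − (k² + iκ)m| ≥ (κ/(2√2 k²))·(b + k²m)`. -/
theorem scalar_coercivity (k κ : ℝ) (hk : 0 < k) (hκ0 : 0 < κ) (hκ : κ ≤ k ^ 2)
    (b m : ℝ) (hb : 0 ≤ b) (hm : 0 ≤ m) :
    κ / (2 * Real.sqrt 2 * k ^ 2) * (b + k ^ 2 * m) ≤
      ‖(b : ℂ) - ((k : ℂ) ^ 2 + (κ : ℂ) * I) * (m : ℂ)‖ :=
  scalar_coercivity_general k κ hκ0 hκ b m
end

section
/- Let E and F be complex inner product spaces, let L : E → F be a linear map, let k > 0 and 0 < κ ≤ k² be real. Then for every v ∈ E, the quantity a(v) := ‖Lv‖² − (k² + iκ)‖v‖² (a complex number) satisfies |a(v)| ≥ (κ/(2√2 k²))·(‖Lv‖² + k²‖v‖²). -/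
/-!
Write `a(v) = x - iκ‖v‖²` with `x = ‖Lv‖² - k²‖v‖²`. Since `κ ≤ k²`, the quantity
`κ (‖Lv‖² + k²‖v‖²) = κ x + 2κk²‖v‖²` is at most `2k² (|x| + κ‖v‖²)`, and
`|Re z| + |Im z| ≤ √2 |z|` for every complex `z`.
-/

open Complex

theorem mul_add_le_two_mul_abs_sub_add {a b c κ : ℝ} (hκ0 : 0 ≤ κ) (hκ : κ ≤ c) :
    κ * (a + c * b) ≤ 2 * c * (|a - c * b| + κ * b) := by
  have hx : κ * (a - c * b) ≤ κ * |a - c * b| := mul_le_mul_of_nonneg_left (le_abs_self _) hκ0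
  have hc : κ * |a - c * b| ≤ c * |a - c * b| := mul_le_mul_of_nonneg_right hκ (abs_nonneg _)
  nlinarith [abs_nonneg (a - c * b)]

theorem le_norm_ofReal_sub_mul_ofReal {a b c κ : ℝ} (hb : 0 ≤ b) (hκ0 : 0 < κ) (hκ : κ ≤ c) :
    κ / (2 * √2 * c) * (a + c * b) ≤ ‖(a : ℂ) - ((c : ℂ) + κ * I) * b‖ := by
  set z : ℂ := (a : ℂ) - ((c : ℂ) + κ * I) * b
  have hre : z.re = a - c * b := by simp [z]
  have him : |z.im| = κ * b := by simp [z, abs_of_nonneg, hb, hκ0.le]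
  have hc : 0 < c := hκ0.trans_le hκ
  rw [div_mul_eq_mul_div, div_le_iff₀ (by positivity)]
  calc κ * (a + c * b) ≤ 2 * c * (|z.re| + |z.im|) := by
        rw [hre, him]; exact mul_add_le_two_mul_abs_sub_add hκ0.le hκ
    _ ≤ 2 * c * (√2 * ‖z‖) := by
        gcongr; exact z.abs_re_add_abs_im_le_sqrt_two_mul_norm
    _ = ‖z‖ * (2 * √2 * c) := by ring

theorem form_coercivity_general {E F : Type*} [NormedAddCommGroup E] [InnerProductSpace ℂ E]
    [NormedAddCommGroup F] [InnerProductSpace ℂ F] (L : E →ₗ[ℂ] F)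
    (k κ : ℝ) (hκ0 : 0 < κ) (hκ : κ ≤ k ^ 2) (v : E) :
    κ / (2 * Real.sqrt 2 * k ^ 2) * (‖L v‖ ^ 2 + k ^ 2 * ‖v‖ ^ 2) ≤
      ‖(‖L v‖ : ℂ) ^ 2 - ((k : ℂ) ^ 2 + (κ : ℂ) * I) * (‖v‖ : ℂ) ^ 2‖ := by
  have h := le_norm_ofReal_sub_mul_ofReal (a := ‖L v‖ ^ 2) (sq_nonneg ‖v‖) hκ0 hκ
  push_cast at h
  exact h

/-- Let `E` and `F` be complex inner product spaces, `L : E → F` a linear map,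
`k > 0` and `0 < κ ≤ k²` real. Then for every `v ∈ E`, the complex number
`a(v) := ‖Lv‖² − (k² + iκ)‖v‖²` satisfies `|a(v)| ≥ (κ/(2√2 k²))·(‖Lv‖² + k²‖v‖²)`. -/
theorem form_coercivity {E F : Type*} [NormedAddCommGroup E] [InnerProductSpace ℂ E]
    [NormedAddCommGroup F] [InnerProductSpace ℂ F] (L : E →ₗ[ℂ] F)
    (k κ : ℝ) (hk : 0 < k) (hκ0 : 0 < κ) (hκ : κ ≤ k ^ 2) (v : E) :
    κ / (2 * Real.sqrt 2 * k ^ 2) * (‖L v‖ ^ 2 + k ^ 2 * ‖v‖ ^ 2) ≤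
      ‖(‖L v‖ : ℂ) ^ 2 - ((k : ℂ) ^ 2 + (κ : ℂ) * I) * (‖v‖ : ℂ) ^ 2‖ :=
  form_coercivity_general L k κ hκ0 hκ v
end

section
/- Let E and F be complex inner product spaces, let L : E → F be a linear map, let k > 0 and κ ∈ ℝ. Then for all u, v ∈ E, |⟨Lu, Lv⟩ − (k² + iκ)⟨u, v⟩| ≤ √(1 + κ²/k⁴) · √(‖Lu‖² + k²‖u‖²) · √(‖Lv‖² + k²‖v‖²). -/
open Complex
open scoped InnerProductSpace

/-! The triangle inequality and Cauchy–Schwarz bound the form by `‖Lu‖‖Lv‖ + |k² + iκ| ‖u‖‖v‖`.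
Since `|k² + iκ| = k² √(1 + κ²/k⁴)` and the square root is at least `1`, this is at most
`√(1 + κ²/k⁴) (‖Lu‖‖Lv‖ + k‖u‖ · k‖v‖)`, and Cauchy–Schwarz in `ℝ²` finishes. -/

lemma Complex.norm_ofReal_add_mul_I_eq_mul_sqrt {x : ℝ} (hx : 0 < x) (y : ℝ) :
    ‖(x : ℂ) + y * I‖ = x * √(1 + y ^ 2 / x ^ 2) := by
  have hfactor : x ^ 2 + y ^ 2 = x ^ 2 * (1 + y ^ 2 / x ^ 2) := by field_simp
  rw [norm_add_mul_I, hfactor, Real.sqrt_mul (sq_nonneg x), Real.sqrt_sq hx.le]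

lemma mul_add_mul_le_sqrt_mul_sqrt (a b c d : ℝ) :
    a * b + c * d ≤ √(a ^ 2 + c ^ 2) * √(b ^ 2 + d ^ 2) := by
  simpa [Fin.sum_univ_two] using Real.sum_mul_le_sqrt_mul_sqrt Finset.univ ![a, c] ![b, d]

lemma mul_add_mul_mul_le_mul_sqrt_mul_sqrt {a b c d C : ℝ} (hab : 0 ≤ a * b) (hC : 1 ≤ C) :
    a * b + C * (c * d) ≤ C * √(a ^ 2 + c ^ 2) * √(b ^ 2 + d ^ 2) :=
  calc a * b + C * (c * d) ≤ C * (a * b + c * d) := by nlinarith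
    _ ≤ C * √(a ^ 2 + c ^ 2) * √(b ^ 2 + d ^ 2) := by
      rw [mul_assoc]
      gcongr
      exact mul_add_mul_le_sqrt_mul_sqrt a b c d

lemma norm_inner_sub_mul_inner_le {E F : Type*} [SeminormedAddCommGroup E] [InnerProductSpace ℂ E]
    [SeminormedAddCommGroup F] [InnerProductSpace ℂ F] (x y : F) (z : ℂ) (u v : E) :
    ‖⟪x, y⟫_ℂ - z * ⟪u, v⟫_ℂ‖ ≤ ‖x‖ * ‖y‖ + ‖z‖ * (‖u‖ * ‖v‖) :=
  calc ‖⟪x, y⟫_ℂ - z * ⟪u, v⟫_ℂ‖ ≤ ‖⟪x, y⟫_ℂ‖ + ‖z‖ * ‖⟪u, v⟫_ℂ‖ := by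
        rw [← norm_mul]; exact norm_sub_le _ _
    _ ≤ ‖x‖ * ‖y‖ + ‖z‖ * (‖u‖ * ‖v‖) := by
        gcongr <;> exact norm_inner_le_norm _ _

/-- Continuity of the sesquilinear form `a_κ(u,v) = ⟨Lu, Lv⟩ − (k² + iκ)⟨u,v⟩` with
respect to the `k`-weighted norm `‖v‖_{curl,k} = √(‖Lv‖² + k²‖v‖²)`. -/
theorem form_continuity {E F : Type*} [NormedAddCommGroup E] [InnerProductSpace ℂ E]
    [NormedAddCommGroup F] [InnerProductSpace ℂ F] (L : E →ₗ[ℂ] F)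
    (k κ : ℝ) (hk : 0 < k) (u v : E) :
    ‖⟪L u, L v⟫_ℂ - ((k : ℂ) ^ 2 + (κ : ℂ) * I) * ⟪u, v⟫_ℂ‖ ≤
      Real.sqrt (1 + κ ^ 2 / k ^ 4) * Real.sqrt (‖L u‖ ^ 2 + k ^ 2 * ‖u‖ ^ 2) *
        Real.sqrt (‖L v‖ ^ 2 + k ^ 2 * ‖v‖ ^ 2) := by
  have hnorm : ‖(k : ℂ) ^ 2 + (κ : ℂ) * I‖ = k ^ 2 * √(1 + κ ^ 2 / k ^ 4) := by
    rw [← ofReal_pow, norm_ofReal_add_mul_I_eq_mul_sqrt (by positivity), ← pow_mul]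
  have hC : 1 ≤ √(1 + κ ^ 2 / k ^ 4) :=
    Real.one_le_sqrt.mpr (le_add_of_nonneg_right (by positivity))
  calc ‖⟪L u, L v⟫_ℂ - ((k : ℂ) ^ 2 + (κ : ℂ) * I) * ⟪u, v⟫_ℂ‖
      ≤ ‖L u‖ * ‖L v‖ + ‖(k : ℂ) ^ 2 + (κ : ℂ) * I‖ * (‖u‖ * ‖v‖) :=
        norm_inner_sub_mul_inner_le _ _ _ _ _
    _ = ‖L u‖ * ‖L v‖ + √(1 + κ ^ 2 / k ^ 4) * ((k * ‖u‖) * (k * ‖v‖)) := by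
        rw [hnorm]; ring
    _ ≤ √(1 + κ ^ 2 / k ^ 4) * √(‖L u‖ ^ 2 + (k * ‖u‖) ^ 2) * √(‖L v‖ ^ 2 + (k * ‖v‖) ^ 2) :=
        mul_add_mul_mul_le_mul_sqrt_mul_sqrt (by positivity) hC
    _ = _ := by simp only [mul_pow]
end

section
/- Let E be a complex inner product space and let T : E → E be a continuous linear operator. Suppose there are constants c > 0 and C > 0 such that |⟨Tv, v⟩| ≥ c‖v‖² for all v ∈ E and ‖Tv‖ ≤ C‖v‖ for all v ∈ E. Then for every r⁰ ∈ E and every natural number m there exists a polynomial p with complex coefficients satisfying deg p ≤ m and p(0) = 1 such that ‖p(T) r⁰‖ ≤ (1 − c²/C²)^{m/2} · ‖r⁰‖, where p(T) denotes the operator obtained by evaluating p at T. -/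
/-!
One step of GMRES from a residual `v` can reach `v - α • T v` for any scalar `α`. Taking
`α • T v` to be the orthogonal projection of `v` onto the line through `T v` leaves
`‖v‖² - |⟪T v, v⟫|² / ‖T v‖²`, and the two bounds on `T` make this at most
`(1 - c² / C²) ‖v‖²`. Iterating `m` times multiplies the residual polynomial by `1 - α X`
at each step, so it keeps degree `≤ m` and value `1` at `0`.
-/

open scoped InnerProductSpace
open Polynomial

section InnerProductSpace

variable {𝕜 E : Type*} [RCLike 𝕜] [NormedAddCommGroup E] [InnerProductSpace 𝕜 E]

theorem norm_sub_inner_div_smul_sq (v w : E) :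
    ‖v - (⟪w, v⟫_𝕜 / ((‖w‖ ^ 2 : ℝ) : 𝕜)) • w‖ ^ 2 = ‖v‖ ^ 2 - ‖⟪w, v⟫_𝕜‖ ^ 2 / ‖w‖ ^ 2 := by
  rcases eq_or_ne w 0 with rfl | hw
  · simp
  have hw' : ‖w‖ ≠ 0 := norm_ne_zero_iff.2 hw
  rw [norm_sub_sq (𝕜 := 𝕜), inner_smul_right, ← inner_conj_symm, norm_smul, norm_div,
    RCLike.norm_ofReal, abs_of_nonneg (by positivity), div_mul_eq_mul_div, RCLike.conj_mul]
  simp only [← RCLike.ofReal_pow, ← RCLike.ofReal_div, RCLike.ofReal_re, RCLike.norm_conj]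
  field_simp
  ring

theorem exists_norm_sub_smul_le_sqrt_mul {c C : ℝ} {v w : E} (hc : 0 ≤ c)
    (hcoer : c * ‖v‖ ^ 2 ≤ ‖⟪w, v⟫_𝕜‖) (hbound : ‖w‖ ≤ C * ‖v‖) :
    ∃ α : 𝕜, ‖v - α • w‖ ≤ √(1 - c ^ 2 / C ^ 2) * ‖v‖ := by
  have hgain : c ^ 2 / C ^ 2 * ‖v‖ ^ 2 ≤ ‖⟪w, v⟫_𝕜‖ ^ 2 / ‖w‖ ^ 2 := by
    rcases eq_or_ne w 0 with rfl | hw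
    · have hzero : c * ‖v‖ ^ 2 = 0 := le_antisymm (by simpa using hcoer) (by positivity)
      rcases mul_eq_zero.1 hzero with h | h <;> simp [h]
    have hw' : 0 < ‖w‖ := norm_pos_iff.2 hw
    have hC : 0 < C := pos_of_mul_pos_left (hw'.trans_le hbound) (norm_nonneg v)
    rw [le_div_iff₀ (by positivity)]
    calc c ^ 2 / C ^ 2 * ‖v‖ ^ 2 * ‖w‖ ^ 2 ≤ c ^ 2 / C ^ 2 * ‖v‖ ^ 2 * (C * ‖v‖) ^ 2 := by gcongr
      _ = (c * ‖v‖ ^ 2) ^ 2 := by field_simp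
      _ ≤ ‖⟪w, v⟫_𝕜‖ ^ 2 := by gcongr
  refine ⟨⟪w, v⟫_𝕜 / ((‖w‖ ^ 2 : ℝ) : 𝕜), ?_⟩
  have hsq : ‖v - (⟪w, v⟫_𝕜 / ((‖w‖ ^ 2 : ℝ) : 𝕜)) • w‖ ^ 2 ≤ (1 - c ^ 2 / C ^ 2) * ‖v‖ ^ 2 := by
    rw [norm_sub_inner_div_smul_sq, sub_mul, one_mul]
    exact sub_le_sub_left hgain _
  have hroot := Real.sqrt_le_sqrt hsq
  rwa [Real.sqrt_sq (norm_nonneg _), Real.sqrt_mul' _ (sq_nonneg _),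
    Real.sqrt_sq (norm_nonneg _)] at hroot

theorem le_of_mul_norm_sq_le_norm_inner {c C : ℝ} {v w : E} (hv : v ≠ 0)
    (hcoer : c * ‖v‖ ^ 2 ≤ ‖⟪w, v⟫_𝕜‖) (hbound : ‖w‖ ≤ C * ‖v‖) : c ≤ C := by
  refine le_of_mul_le_mul_right ?_ (pow_pos (norm_pos_iff.2 hv) 2)
  calc c * ‖v‖ ^ 2 ≤ ‖⟪w, v⟫_𝕜‖ := hcoer
    _ ≤ ‖w‖ * ‖v‖ := norm_inner_le_norm w v
    _ ≤ C * ‖v‖ * ‖v‖ := by gcongr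
    _ = C * ‖v‖ ^ 2 := by ring

end InnerProductSpace

theorem exists_polynomial_norm_aeval_apply_le {𝕜 E : Type*} [NormedField 𝕜]
    [NormedAddCommGroup E] [NormedSpace 𝕜 E] {ρ : ℝ} (hρ : 0 ≤ ρ) (T : E →L[𝕜] E)
    (hstep : ∀ v, ∃ α : 𝕜, ‖v - α • T v‖ ≤ ρ * ‖v‖) (r : E) (n : ℕ) :
    ∃ p : 𝕜[X], p.natDegree ≤ n ∧ p.eval 0 = 1 ∧ ‖aeval T p r‖ ≤ ρ ^ n * ‖r‖ := by
  induction n with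
  | zero => exact ⟨1, by simp, by simp, by simp⟩
  | succ n ih =>
    obtain ⟨p, hdeg, heval, hnorm⟩ := ih
    obtain ⟨α, hα⟩ := hstep (aeval T p r)
    have happly : aeval T ((1 - C α * X) * p) r = aeval T p r - α • T (aeval T p r) := by
      simp [sub_mul, Algebra.algebraMap_eq_smul_one]
    refine ⟨(1 - C α * X) * p, ?_, by simp [heval], ?_⟩
    · rw [add_comm]
      exact natDegree_mul_le_of_le (by compute_degree) hdeg
    · rw [happly, pow_succ', mul_assoc]
      exact hα.trans (by gcongr)

theorem gmres_convergence_general {E : Type*} [NormedAddCommGroup E] [InnerProductSpace ℂ E]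
    (T : E →L[ℂ] E) (c C : ℝ) (hc : 0 < c)
    (hcoer : ∀ v : E, c * ‖v‖ ^ 2 ≤ ‖⟪T v, v⟫_ℂ‖)
    (hbound : ∀ v : E, ‖T v‖ ≤ C * ‖v‖)
    (r0 : E) (m : ℕ) :
    ∃ p : Polynomial ℂ, p.natDegree ≤ m ∧ p.eval 0 = 1 ∧
      ‖(Polynomial.aeval T p) r0‖ ≤ (1 - c ^ 2 / C ^ 2) ^ ((m : ℝ) / 2) * ‖r0‖ := by
  rcases eq_or_ne r0 0 with rfl | hr0
  · exact ⟨1, by simp, by simp, by simp⟩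
  have hcC : c ≤ C := le_of_mul_norm_sq_le_norm_inner hr0 (hcoer r0) (hbound r0)
  have hB : 0 ≤ 1 - c ^ 2 / C ^ 2 :=
    sub_nonneg.2 (div_le_one_of_le₀ (pow_le_pow_left₀ hc.le hcC 2) (sq_nonneg C))
  obtain ⟨p, hdeg, heval, hnorm⟩ := exists_polynomial_norm_aeval_apply_le (Real.sqrt_nonneg _) T
    (fun v ↦ exists_norm_sub_smul_le_sqrt_mul hc.le (hcoer v) (hbound v)) r0 m
  refine ⟨p, hdeg, heval, hnorm.trans_eq ?_⟩
  rw [Real.sqrt_eq_rpow, ← Real.rpow_natCast, ← Real.rpow_mul hB, one_div_mul_eq_div]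

/-- Elman-type GMRES convergence estimate: if `T` is a continuous linear operator on a
complex inner product space with `|⟨Tv, v⟩| ≥ c‖v‖²` and `‖Tv‖ ≤ C‖v‖` for constants
`c, C > 0`, then for every `r⁰` and `m : ℕ` there is a polynomial `p` of degree `≤ m`
with `p(0) = 1` and `‖p(T) r⁰‖ ≤ (1 − c²/C²)^{m/2}·‖r⁰‖`. -/
theorem gmres_convergence {E : Type*} [NormedAddCommGroup E] [InnerProductSpace ℂ E]
    (T : E →L[ℂ] E) (c C : ℝ) (hc : 0 < c) (hC : 0 < C)
    (hcoer : ∀ v : E, c * ‖v‖ ^ 2 ≤ ‖⟪T v, v⟫_ℂ‖)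
    (hbound : ∀ v : E, ‖T v‖ ≤ C * ‖v‖)
    (r0 : E) (m : ℕ) :
    ∃ p : Polynomial ℂ, p.natDegree ≤ m ∧ p.eval 0 = 1 ∧
      ‖(Polynomial.aeval T p) r0‖ ≤ (1 - c ^ 2 / C ^ 2) ^ ((m : ℝ) / 2) * ‖r0‖ :=
  gmres_convergence_general T c C hc hcoer hbound r0 m
end
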